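/- arXiv:math/0602414 — 2 statements merged into one kernel-verified Lean document; each statement's English description precedes it below -/
import Mathlib

section
/- For all X, Y ∈ su(3) one has ‖[X,Y]‖ ≤ (1/2)‖X‖‖Y‖; consequently, for every orthonormal triple X, Y, Z in su(3) the calibration inequality |2⟨[X,Y],Z⟩| ≤ 1 holds. -/
noncomputable section
open Matrix

attribute [local instance] LieRing.ofAssociativeRing

/-- `su n`: the real Lie algebra of traceless skew-Hermitian complex `n × n` matrices, as a real
Lie subalgebra of the matrix algebra. -/
def su (n : ℕ) : LieSubalgebra ℝ (Matrix (Fin n) (Fin n) ℂ) where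
  carrier := {X | Xᴴ = -X ∧ X.trace = 0}
  add_mem' := by
    rintro X Y ⟨h1, h2⟩ ⟨h3, h4⟩
    refine ⟨?_, ?_⟩
    · rw [Matrix.conjTranspose_add, h1, h3, neg_add]
    · rw [Matrix.trace_add, h2, h4, add_zero]
  zero_mem' := by
    constructor <;> simp
  smul_mem' := by
    rintro c X ⟨h1, h2⟩
    refine ⟨?_, ?_⟩
    · rw [Matrix.conjTranspose_smul, h1, star_trivial, smul_neg]
    · rw [Matrix.trace_smul, h2, smul_zero]
  lie_mem' := by
    rintro X Y ⟨h1, h2⟩ ⟨h3, h4⟩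
    refine ⟨?_, ?_⟩
    · rw [Ring.lie_def, Matrix.conjTranspose_sub, Matrix.conjTranspose_mul,
        Matrix.conjTranspose_mul, h1, h3, neg_mul_neg, neg_mul_neg, neg_sub]
    · rw [Ring.lie_def, Matrix.trace_sub, Matrix.trace_mul_comm, sub_self]

/-- The inner product `⟨X,Y⟩ = -8 Re tr (XY)` on `su 3`. -/
def innSU (X Y : su 3) : ℝ :=
  -8 * (((X : Matrix (Fin 3) (Fin 3) ℂ) * (Y : Matrix (Fin 3) (Fin 3) ℂ)).trace).re

/-- The associated norm on `su 3`. -/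
def normSU (X : su 3) : ℝ := Real.sqrt (innSU X X)

/-!
Write a skew-Hermitian `X` as `U D U*` with `D = diagonal d` and `U` unitary. Conjugating by `U`
preserves the Frobenius norm and turns `XY - YX` into the matrix with entries `(dᵢ - dⱼ) cᵢⱼ`,
and `|dᵢ - dⱼ|² ≤ 2 ∑ₖ |dₖ|²`; hence `‖XY - YX‖_F² ≤ 2 ‖X‖_F² ‖Y‖_F²`. On `su 3` one has
`⟨X, X⟩ = 8 ‖X‖_F²`, which turns this into `‖[X, Y]‖ ≤ ‖X‖ ‖Y‖ / 2`; the calibration bound is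
then Cauchy–Schwarz for `⟨·, ·⟩`.
-/

open scoped Matrix.Norms.Frobenius

namespace Matrix

variable {m n 𝕜 : Type*} [Fintype m] [Fintype n] [RCLike 𝕜]

theorem frobenius_norm_sq_eq_sum (A : Matrix m n 𝕜) : ‖A‖ ^ 2 = ∑ i, ∑ j, ‖A i j‖ ^ 2 := by
  change ‖WithLp.toLp 2 fun i => WithLp.toLp 2 fun j => A i j‖ ^ 2 = _
  simp only [PiLp.norm_sq_eq_of_L2]

theorem frobenius_norm_sq_eq_re_trace (A : Matrix m n 𝕜) :
    ‖A‖ ^ 2 = RCLike.re (A * Aᴴ).trace := by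
  simp only [frobenius_norm_sq_eq_sum, trace, diag_apply, mul_apply, conjTranspose_apply,
    RCLike.star_def, RCLike.mul_conj, map_sum, RCLike.re_ofReal_pow]

theorem frobenius_norm_unitary_mul [DecidableEq m] {U : Matrix m m 𝕜} (hU : U ∈ unitaryGroup m 𝕜)
    (A : Matrix m n 𝕜) : ‖U * A‖ = ‖A‖ := by
  have hsq : ‖U * A‖ ^ 2 = ‖A‖ ^ 2 := by
    rw [frobenius_norm_sq_eq_re_trace, frobenius_norm_sq_eq_re_trace, conjTranspose_mul,
      Matrix.mul_assoc, trace_mul_comm, Matrix.mul_assoc, Matrix.mul_assoc,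
      ← star_eq_conjTranspose U, hU.1, Matrix.mul_one]
  exact (pow_left_inj₀ (norm_nonneg _) (norm_nonneg _) two_ne_zero).1 hsq

theorem frobenius_norm_mul_unitary [DecidableEq n] {U : Matrix n n 𝕜} (hU : U ∈ unitaryGroup n 𝕜)
    (A : Matrix m n 𝕜) : ‖A * U‖ = ‖A‖ := by
  rw [← frobenius_norm_conjTranspose, conjTranspose_mul, ← star_eq_conjTranspose U,
    frobenius_norm_unitary_mul (Unitary.star_mem hU), frobenius_norm_conjTranspose]

theorem frobenius_norm_diagonal_commutator_sq_le [DecidableEq n] (d : n → 𝕜) (C : Matrix n n 𝕜) :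
    ‖diagonal d * C - C * diagonal d‖ ^ 2 ≤ 2 * ‖diagonal d‖ ^ 2 * ‖C‖ ^ 2 := by
  have hd : ‖diagonal d‖ ^ 2 = ∑ k, ‖d k‖ ^ 2 := by
    rw [frobenius_norm_diagonal, EuclideanSpace.norm_sq_eq]
  have hgap : ∀ i j, ‖d i - d j‖ ^ 2 ≤ 2 * ∑ k, ‖d k‖ ^ 2 := by
    intro i j
    rcases eq_or_ne i j with rfl | hij
    · rw [sub_self, norm_zero, zero_pow two_ne_zero]; positivity
    have hpair : ‖d i‖ ^ 2 + ‖d j‖ ^ 2 ≤ ∑ k, ‖d k‖ ^ 2 := by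
      rw [← Finset.sum_pair (f := fun k => ‖d k‖ ^ 2) hij]
      exact Finset.sum_le_sum_of_subset_of_nonneg (Finset.subset_univ _) fun k _ _ => by positivity
    nlinarith [norm_sub_le (d i) (d j), norm_nonneg (d i - d j), sq_nonneg (‖d i‖ - ‖d j‖)]
  rw [hd, frobenius_norm_sq_eq_sum, frobenius_norm_sq_eq_sum, Finset.mul_sum]
  gcongr with i _
  rw [Finset.mul_sum]
  gcongr with j _
  simp only [Matrix.sub_apply, diagonal_mul, mul_diagonal]
  rw [show d i * C i j - C i j * d j = (d i - d j) * C i j by ring, norm_mul, mul_pow]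
  exact mul_le_mul_of_nonneg_right (hgap i j) (by positivity)

theorem IsHermitian.frobenius_norm_commutator_sq_le [DecidableEq n] {A : Matrix n n 𝕜}
    (hA : A.IsHermitian) (B : Matrix n n 𝕜) :
    ‖A * B - B * A‖ ^ 2 ≤ 2 * ‖A‖ ^ 2 * ‖B‖ ^ 2 := by
  set U : Matrix n n 𝕜 := (hA.eigenvectorUnitary : Matrix n n 𝕜)
  have hU : U ∈ unitaryGroup n 𝕜 := hA.eigenvectorUnitary.2
  set D := diagonal (RCLike.ofReal ∘ hA.eigenvalues : n → 𝕜)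
  set C := star U * B * U
  have hA' : A = U * D * star U := by simpa using hA.spectral_theorem
  have hB : B = U * C * star U := by
    simp only [C, Matrix.mul_assoc, Unitary.mul_star_self_of_mem hU, Matrix.mul_one,
      ← Matrix.mul_assoc U, Matrix.one_mul]
  have hconj (M : Matrix n n 𝕜) : ‖U * M * star U‖ = ‖M‖ := by
    rw [frobenius_norm_mul_unitary (Unitary.star_mem hU), frobenius_norm_unitary_mul hU]
  have hcomm : A * B - B * A = U * (D * C - C * D) * star U := by
    have hUU : star U * U = 1 := Unitary.star_mul_self_of_mem hU
    rw [hA', hB]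
    simp only [Matrix.mul_sub, Matrix.sub_mul, Matrix.mul_assoc]
    simp only [← Matrix.mul_assoc (star U) U, hUU, Matrix.one_mul]
  rw [hcomm, hconj, hA', hconj, hB, hconj]
  exact frobenius_norm_diagonal_commutator_sq_le _ C

theorem frobenius_norm_commutator_sq_le_of_conjTranspose_eq_neg [DecidableEq n]
    {X : Matrix n n ℂ} (hX : Xᴴ = -X) (Y : Matrix n n ℂ) :
    ‖X * Y - Y * X‖ ^ 2 ≤ 2 * ‖X‖ ^ 2 * ‖Y‖ ^ 2 := by
  have hIX : (Complex.I • X).IsHermitian := by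
    rw [IsHermitian, conjTranspose_smul, hX, Complex.star_def, Complex.conj_I, neg_smul_neg]
  have := hIX.frobenius_norm_commutator_sq_le Y
  rwa [Matrix.smul_mul, Matrix.mul_smul, ← smul_sub, norm_smul, norm_smul, Complex.norm_I,
    one_mul, one_mul] at this

end Matrix

theorem innSU_self (X : su 3) : innSU X X = 8 * ‖(X : Matrix (Fin 3) (Fin 3) ℂ)‖ ^ 2 := by
  rw [innSU, frobenius_norm_sq_eq_re_trace, X.2.1, Matrix.mul_neg, trace_neg, map_neg,
    RCLike.re_to_complex]
  ring

theorem innSU_self_nonneg (X : su 3) : 0 ≤ innSU X X := by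
  rw [innSU_self]; positivity

abbrev innSUCore : PreInnerProductSpace.Core ℝ (su 3) where
  inner := innSU
  conj_inner_symm X Y := by rw [conj_trivial, innSU, innSU, trace_mul_comm]
  re_inner_nonneg := innSU_self_nonneg
  add_left X Y Z := by
    simp only [innSU, AddMemClass.coe_add, Matrix.add_mul, trace_add, Complex.add_re]; ring
  smul_left X Y r := by
    simp only [innSU, SetLike.val_smul, Matrix.smul_mul, trace_smul, Complex.real_smul,
      Complex.re_ofReal_mul, conj_trivial]; ring

theorem abs_innSU_le (X Y : su 3) : |innSU X Y| ≤ normSU X * normSU Y :=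
  letI := innSUCore
  InnerProductSpace.Core.norm_inner_le_norm (𝕜 := ℝ) X Y

theorem innSU_lie_self_le (X Y : su 3) :
    innSU ⁅X, Y⁆ ⁅X, Y⁆ ≤ innSU X X * innSU Y Y / 4 := by
  have h := frobenius_norm_commutator_sq_le_of_conjTranspose_eq_neg X.2.1
    (Y : Matrix (Fin 3) (Fin 3) ℂ)
  rw [innSU_self, innSU_self, innSU_self, LieSubalgebra.coe_bracket, Ring.lie_def]
  linarith

theorem normSU_lie_le (X Y : su 3) : normSU ⁅X, Y⁆ ≤ 1 / 2 * normSU X * normSU Y := by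
  calc normSU ⁅X, Y⁆ ≤ √(innSU X X * innSU Y Y / 4) := Real.sqrt_le_sqrt (innSU_lie_self_le X Y)
    _ = 1 / 2 * normSU X * normSU Y := by
      rw [Real.sqrt_div' _ (by norm_num), Real.sqrt_mul (innSU_self_nonneg X), normSU, normSU,
        show (4 : ℝ) = 2 ^ 2 by norm_num, Real.sqrt_sq (by norm_num)]
      ring

/-- For all `X, Y ∈ su(3)` one has `‖[X,Y]‖ ≤ (1/2)‖X‖‖Y‖`; consequently, for
every orthonormal triple `X, Y, Z` in `su(3)` the calibration inequality `|2⟨[X,Y],Z⟩| ≤ 1`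
holds. -/
theorem su3_bracket_norm_ineq_and_calibration_bound :
    (∀ X Y : su 3, normSU ⁅X, Y⁆ ≤ (1/2) * normSU X * normSU Y)
    ∧ (∀ X Y Z : su 3, innSU X X = 1 → innSU Y Y = 1 → innSU Z Z = 1 →
        innSU X Y = 0 → innSU X Z = 0 → innSU Y Z = 0 →
        |2 * innSU ⁅X, Y⁆ Z| ≤ 1) := by
  refine ⟨normSU_lie_le, fun X Y Z hX hY hZ _ _ _ => ?_⟩
  have hnorm {W : su 3} (hW : innSU W W = 1) : normSU W = 1 := by rw [normSU, hW, Real.sqrt_one]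
  calc |2 * innSU ⁅X, Y⁆ Z| = 2 * |innSU ⁅X, Y⁆ Z| := by rw [abs_mul, abs_two]
    _ ≤ 2 * (normSU ⁅X, Y⁆ * normSU Z) := by gcongr; exact abs_innSU_le _ _
    _ ≤ 2 * (1 / 2 * normSU X * normSU Y * normSU Z) := by
      gcongr
      · rw [hnorm hZ]; norm_num
      · exact normSU_lie_le X Y
    _ = 1 := by rw [hnorm hX, hnorm hY, hnorm hZ]; norm_num
end
end

section
/- Let ρ₀ be the PSU(3)-form on Euclidean ℝ⁸ and [·,·]_{ρ₀} the induced bracket. Then [·,·]_{ρ₀} satisfies the Jacobi identity, and the resulting Lie algebra (ℝ⁸, [·,·]_{ρ₀}) is isomorphic as a real Lie algebra to su(3). -/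
noncomputable section

/-- The standard basis vectors of ℝ⁸ (`e i` is `eᵢ₊₁` in the paper's notation). -/
def e (i : Fin 8) : Fin 8 → ℝ := fun j => if i = j then 1 else 0

/-- The standard inner product on ℝ⁸. -/
def dot (x y : Fin 8 → ℝ) : ℝ := ∑ i, x i * y i

/-- The alternating 3-form `eⁱ ∧ eʲ ∧ eᵏ` on ℝ⁸ (indices in `Fin 8`). -/
def wedge3 (i j k : Fin 8) : AlternatingMap ℝ (Fin 8 → ℝ) ℝ (Fin 3) :=
  (Matrix.detRowAlternating : AlternatingMap ℝ (Fin 3 → ℝ) ℝ (Fin 3)).compLinearMap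
    (LinearMap.funLeft ℝ ℝ ![i, j, k])

/-- The PSU(3)-form `ρ₀ = ½e^{123} + ¼e^1∧(e^{47}−e^{56}) + ¼e^2∧(e^{46}+e^{57})
+ ¼e^3∧(e^{45}−e^{67}) + (√3/4)e^8∧(e^{45}+e^{67})` (indices shifted down by one). -/
def ρ₀ : AlternatingMap ℝ (Fin 8 → ℝ) ℝ (Fin 3) :=
  (1/2 : ℝ) • wedge3 0 1 2
  + (1/4 : ℝ) • (wedge3 0 3 6 - wedge3 0 4 5)
  + (1/4 : ℝ) • (wedge3 1 3 5 + wedge3 1 4 6)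
  + (1/4 : ℝ) • (wedge3 2 3 4 - wedge3 2 5 6)
  + (Real.sqrt 3 / 4) • (wedge3 7 3 4 + wedge3 7 5 6)

/-- The bracket `[x,y]_ρ` induced by a 3-form `ρ`, determined by `⟨[x,y]_ρ, z⟩ = ρ(x,y,z)`. -/
def bracketOf (ρ : AlternatingMap ℝ (Fin 8 → ℝ) ℝ (Fin 3)) (x y : Fin 8 → ℝ) : Fin 8 → ℝ :=
  fun k => ρ ![x, y, e k]
open Matrix

attribute [local instance 100] LieRing.ofAssociativeRing

/-!
In terms of the Gell-Mann matrices `λₐ` and the structure constants of `su(3)`,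
`[λₐ/2, λ_b/2] = i f_{abc} λ_c/2`, the PSU(3)-form is `ρ₀ = ½ ∑_{a<b<c} f_{abc} e^{abc}`.
Hence `x ↦ -(i/4) ∑ xₐ λₐ` is a linear isomorphism `ℝ⁸ ≃ su(3)` carrying `[·,·]_{ρ₀}` to the
commutator, and the Jacobi identity for `[·,·]_{ρ₀}` is inherited from `su(3)` through it.
-/

theorem jacobi_of_injective_of_map_bracket {M L : Type*} [AddCommGroup M] [LieRing L]
    (b : M → M → M) (f : M →+ L) (hf : Function.Injective f)
    (hb : ∀ x y, f (b x y) = ⁅f x, f y⁆) (x y z : M) :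
    b (b x y) z + b (b y z) x + b (b z x) y = 0 := by
  apply hf
  simp only [map_add, hb, map_zero]
  rw [← lie_skew ⁅f x, f y⁆, ← lie_skew ⁅f y, f z⁆, ← lie_skew ⁅f z, f x⁆, ← neg_eq_zero,
    ← lie_jacobi (f x) (f y) (f z)]
  abel

theorem wedge3_apply (x y z : Fin 8 → ℝ) (i j k : Fin 8) :
    wedge3 i j k ![x, y, z] =
      x i * (y j * z k - y k * z j) - x j * (y i * z k - y k * z i)
        + x k * (y i * z j - y j * z i) := by
  show Matrix.det (Matrix.of fun m => (![x, y, z] m) ∘ ![i, j, k]) = _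
  simp [Matrix.det_fin_three]
  ring

theorem bracketOf_ρ₀_eq (x y : Fin 8 → ℝ) :
    bracketOf ρ₀ x y = ![
      (x 1 * y 2 - x 2 * y 1) / 2 + (x 3 * y 6 - x 6 * y 3 - x 4 * y 5 + x 5 * y 4) / 4,
      (x 2 * y 0 - x 0 * y 2) / 2 + (x 3 * y 5 - x 5 * y 3 + x 4 * y 6 - x 6 * y 4) / 4,
      (x 0 * y 1 - x 1 * y 0) / 2 + (x 3 * y 4 - x 4 * y 3 - x 5 * y 6 + x 6 * y 5) / 4,
      (x 4 * y 2 - x 2 * y 4 + x 5 * y 1 - x 1 * y 5 + x 6 * y 0 - x 0 * y 6) / 4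
        + √3 / 4 * (x 4 * y 7 - x 7 * y 4),
      (x 2 * y 3 - x 3 * y 2 + x 0 * y 5 - x 5 * y 0 + x 6 * y 1 - x 1 * y 6) / 4
        + √3 / 4 * (x 7 * y 3 - x 3 * y 7),
      (x 2 * y 6 - x 6 * y 2 + x 1 * y 3 - x 3 * y 1 + x 4 * y 0 - x 0 * y 4) / 4
        + √3 / 4 * (x 6 * y 7 - x 7 * y 6),
      (x 5 * y 2 - x 2 * y 5 + x 0 * y 3 - x 3 * y 0 + x 1 * y 4 - x 4 * y 1) / 4
        + √3 / 4 * (x 7 * y 5 - x 5 * y 7),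
      √3 / 4 * (x 3 * y 4 - x 4 * y 3 + x 5 * y 6 - x 6 * y 5)] := by
  funext k
  fin_cases k <;> simp [bracketOf, ρ₀, wedge3_apply, e] <;> ring

/-- `x ↦ -(i/4) ∑ₐ xₐ λₐ₊₁` for the Gell-Mann matrices `λ₁, …, λ₈`, with every entry written
as `⟨re, im⟩`. -/
def toSu3 (x : Fin 8 → ℝ) : Matrix (Fin 3) (Fin 3) ℂ :=
  (-4⁻¹ : ℝ) • !![⟨0, x 2 + √3 / 3 * x 7⟩, ⟨x 1, x 0⟩, ⟨x 4, x 3⟩;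
    ⟨-x 1, x 0⟩, ⟨0, -x 2 + √3 / 3 * x 7⟩, ⟨x 6, x 5⟩;
    ⟨-x 4, x 3⟩, ⟨-x 6, x 5⟩, ⟨0, -(2 * √3 / 3 * x 7)⟩]

def ofSu3 (X : Matrix (Fin 3) (Fin 3) ℂ) : Fin 8 → ℝ :=
  ![-4 * (X 0 1).im, -4 * (X 0 1).re, 2 * ((X 1 1).im - (X 0 0).im), -4 * (X 0 2).im,
    -4 * (X 0 2).re, -4 * (X 1 2).im, -4 * (X 1 2).re, 2 * √3 * (X 2 2).im]

theorem toSu3_add (x y : Fin 8 → ℝ) : toSu3 (x + y) = toSu3 x + toSu3 y := by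
  ext i j
  fin_cases i <;> fin_cases j <;> apply Complex.ext <;> simp [toSu3] <;> ring

theorem toSu3_smul (c : ℝ) (x : Fin 8 → ℝ) : toSu3 (c • x) = c • toSu3 x := by
  ext i j
  fin_cases i <;> fin_cases j <;> apply Complex.ext <;> simp [toSu3] <;> ring

theorem toSu3_mem_su (x : Fin 8 → ℝ) : toSu3 x ∈ su 3 := by
  refine ⟨?_, ?_⟩
  · ext i j
    fin_cases i <;> fin_cases j <;> apply Complex.ext <;> simp [toSu3] <;> ring
  · simp [toSu3, Matrix.trace_fin_three, Complex.ext_iff]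
    ring

theorem ofSu3_toSu3 (x : Fin 8 → ℝ) : ofSu3 (toSu3 x) = x := by
  have h7 : √3 ^ 2 * x 7 = 3 * x 7 := by rw [Real.sq_sqrt (by norm_num)]
  funext k
  fin_cases k <;> simp [ofSu3, toSu3] <;> linarith

theorem toSu3_ofSu3 {X : Matrix (Fin 3) (Fin 3) ℂ} (hX : X ∈ su 3) : toSu3 (ofSu3 X) = X := by
  obtain ⟨hskew, htr⟩ := hX
  have hre (i j) : (X j i).re = -(X i j).re := by
    simpa using congr_arg Complex.re (congr_fun₂ hskew i j)
  have him (i j) : (X j i).im = (X i j).im := by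
    simpa using congr_arg Complex.im (congr_fun₂ hskew i j)
  have htr_im : (X 0 0).im + (X 1 1).im + (X 2 2).im = 0 := by
    simpa [Matrix.trace_fin_three] using congr_arg Complex.im htr
  have h22 : √3 ^ 2 * (X 2 2).im = 3 * (X 2 2).im := by rw [Real.sq_sqrt (by norm_num)]
  ext i j
  fin_cases i <;> fin_cases j <;> apply Complex.ext <;> simp [toSu3, ofSu3] <;>
    linarith [hre 0 0, hre 1 1, hre 2 2, hre 0 1, hre 0 2, hre 1 2, him 0 1, him 0 2, him 1 2]

set_option maxHeartbeats 400000 in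
theorem toSu3_bracketOf_ρ₀ (x y : Fin 8 → ℝ) :
    toSu3 (bracketOf ρ₀ x y) = toSu3 x * toSu3 y - toSu3 y * toSu3 x := by
  have hs : √3 ^ 2 = 3 := Real.sq_sqrt (by norm_num)
  rw [bracketOf_ρ₀_eq]
  ext i j
  fin_cases i <;> fin_cases j <;> apply Complex.ext <;>
    simp [toSu3] <;> ring_nf <;> simp only [hs] <;> ring

def su3Equiv : (Fin 8 → ℝ) ≃ₗ[ℝ] su 3 where
  toFun x := ⟨toSu3 x, toSu3_mem_su x⟩
  map_add' x y := Subtype.ext (toSu3_add x y)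
  map_smul' c x := Subtype.ext (toSu3_smul c x)
  invFun X := ofSu3 X
  left_inv := ofSu3_toSu3
  right_inv X := Subtype.ext (toSu3_ofSu3 X.2)

theorem su3Equiv_bracketOf_ρ₀ (x y : Fin 8 → ℝ) :
    su3Equiv (bracketOf ρ₀ x y) = ⁅su3Equiv x, su3Equiv y⁆ :=
  Subtype.ext ((toSu3_bracketOf_ρ₀ x y).trans (Ring.lie_def _ _).symm)

/-- The bracket induced by the PSU(3)-form `ρ₀` on Euclidean ℝ⁸ satisfies the
Jacobi identity, and the resulting Lie algebra `(ℝ⁸, [·,·]_{ρ₀})` is isomorphic as a real Lie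
algebra to `su(3)`. -/
theorem psu3_form_bracket_jacobi_and_iso_su3 :
    (∀ x y z : Fin 8 → ℝ,
      bracketOf ρ₀ (bracketOf ρ₀ x y) z + bracketOf ρ₀ (bracketOf ρ₀ y z) x
        + bracketOf ρ₀ (bracketOf ρ₀ z x) y = 0)
    ∧ ∃ f : (Fin 8 → ℝ) ≃ₗ[ℝ] su 3, ∀ x y : Fin 8 → ℝ,
        f (bracketOf ρ₀ x y) = ⁅f x, f y⁆ :=
  ⟨jacobi_of_injective_of_map_bracket (bracketOf ρ₀) su3Equiv.toAddMonoidHom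
      su3Equiv.injective su3Equiv_bracketOf_ρ₀,
    su3Equiv, su3Equiv_bracketOf_ρ₀⟩
end
end
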